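/- Let n and k be natural numbers with gcd(k, n) = 1, and let F : 𝔽_{2ⁿ} → 𝔽_{2ⁿ} be the Gold function F(x) = x^{2^k + 1}. Then for all a, α, b ∈ 𝔽_{2ⁿ} with b ≠ F(a), one has d_{G_F}(a, b) = d_{G_F}(α, b + F(a) + F(α)); that is, the exclude distribution of G_F is uniform on the partition {{a} × (𝔽_{2ⁿ} ∖ {F(a)}) : a ∈ 𝔽_{2ⁿ}} of (𝔽_{2ⁿ} × 𝔽_{2ⁿ}) ∖ G_F. -/

import Mathlib

/-- The finite field `𝔽_{2ⁿ}` is finite, so we may fix a `Fintype` structure on it. -/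
noncomputable instance (n : ℕ) : Fintype (GaloisField 2 n) := Fintype.ofFinite _

noncomputable instance (n : ℕ) : DecidableEq (GaloisField 2 n) := Classical.decEq _

/-- The graph `G_F = {(x, F(x)) : x ∈ 𝔽_{2ⁿ}}` of `F`, as a finite set. -/
noncomputable def graphF {K : Type*} [Fintype K] [DecidableEq K] (F : K → K) :
    Finset (K × K) :=
  Finset.univ.image (fun x => (x, F x))

/-- The exclude multiplicity of `y` w.r.t. `S`: the number of 3-element subsets of `S`
whose elements sum to `y`. -/
noncomputable def excMult {G : Type*} [AddCommGroup G] [DecidableEq G] (S : Finset G)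
    (y : G) : ℕ :=
  ((S.powersetCard 3).filter (fun T => T.sum id = y)).card

/-!
For `c : K` put `φ_c (x, y) = (x + c, y + x ^ 2 ^ k * c + x * c ^ 2 ^ k + c ^ (2 ^ k + 1))`.
By additivity of Frobenius, `φ_c` is an additive bijection followed by a translation, and
`φ_c (x, F x) = (x + c, F (x + c))`, so `φ_c` permutes the graph of `F`. In characteristic 2 a
translation `t` satisfies `3 t = t`, hence `φ_c` preserves sums of three points and therefore
exclude multiplicities. Taking `c = a + α` sends `(a, b)` to `(α, b + F a + F α)`.
-/

section ExcludeMultiplicity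

variable {G : Type*} [AddCommGroup G] [DecidableEq G]

lemma map_sum_of_card_eq_three {e : G → G}
    (he : ∀ p q r, e (p + q + r) = e p + e q + e r) {T : Finset G} (hT : T.card = 3) :
    e (∑ x ∈ T, x) = ∑ x ∈ T, e x := by
  obtain ⟨p, q, r, hpq, hpr, hqr, rfl⟩ := Finset.card_eq_three.mp hT
  simp only [Finset.sum_insert, Finset.mem_insert, Finset.mem_singleton, hpq, hpr, hqr,
    or_self, not_false_eq_true, Finset.sum_singleton, ← add_assoc, he]

lemma excMult_map_equiv (e : G ≃ G) (he : ∀ p q r, e (p + q + r) = e p + e q + e r)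
    (S : Finset G) (y : G) :
    excMult (S.map e.toEmbedding) (e y) = excMult S y := by
  unfold excMult
  rw [Finset.powersetCard_map, Finset.filter_map, Finset.card_map]
  congr 1
  refine Finset.filter_congr fun T hT => ?_
  have hsum := map_sum_of_card_eq_three he (Finset.mem_powersetCard.mp hT).2
  change (T.map e.toEmbedding).sum id = e y ↔ T.sum id = y
  simp only [Finset.sum_map, Equiv.coe_toEmbedding, id_eq, ← hsum, e.apply_eq_iff_eq]

end ExcludeMultiplicity

section GoldShift

variable {K : Type*} [CommRing K] [CharP K 2] (k : ℕ)

def goldShift (c : K) (p : K × K) : K × K :=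
  (p.1 + c, p.2 + p.1 ^ 2 ^ k * c + p.1 * c ^ 2 ^ k + c ^ (2 ^ k + 1))

lemma goldShift_involutive (c : K) : Function.Involutive (goldShift k c) := by
  have h2 : (2 : K) = 0 := CharTwo.two_eq_zero
  rintro ⟨u, v⟩
  simp only [goldShift, add_pow_char_pow, Prod.mk.injEq]
  constructor
  · linear_combination c * h2
  · linear_combination (u ^ 2 ^ k * c + u * c ^ 2 ^ k + 2 * c ^ (2 ^ k + 1)) * h2

lemma goldShift_add_add (c : K) (p q r : K × K) :
    goldShift k c (p + q + r) = goldShift k c p + goldShift k c q + goldShift k c r := by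
  have h2 : (2 : K) = 0 := CharTwo.two_eq_zero
  simp only [goldShift, Prod.fst_add, Prod.snd_add, add_pow_char_pow, Prod.mk_add_mk,
    Prod.mk.injEq]
  constructor
  · linear_combination -c * h2
  · linear_combination -c ^ (2 ^ k + 1) * h2

lemma goldShift_mk_pow (c x : K) :
    goldShift k c (x, x ^ (2 ^ k + 1)) = (x + c, (x + c) ^ (2 ^ k + 1)) := by
  simp only [goldShift, pow_succ _ (2 ^ k), add_pow_char_pow]
  ring_nf

lemma goldShift_add_right (a α b : K) :
    goldShift k (a + α) (a, b) = (α, b + a ^ (2 ^ k + 1) + α ^ (2 ^ k + 1)) := by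
  have h2 : (2 : K) = 0 := CharTwo.two_eq_zero
  simp only [goldShift, pow_succ _ (2 ^ k), add_pow_char_pow, Prod.mk.injEq]
  constructor
  · linear_combination a * h2
  · linear_combination (a ^ 2 ^ k * a + a ^ 2 ^ k * α + a * α ^ 2 ^ k) * h2

variable [Fintype K] [DecidableEq K]

lemma graphF_map_goldShift (c : K) :
    (graphF fun x : K => x ^ (2 ^ k + 1)).map (goldShift_involutive k c).toPerm.toEmbedding =
      graphF fun x : K => x ^ (2 ^ k + 1) := by
  have hcomp : goldShift k c ∘ (fun x : K => (x, x ^ (2 ^ k + 1))) =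
      (fun x : K => (x, x ^ (2 ^ k + 1))) ∘ Equiv.addRight c :=
    funext (goldShift_mk_pow k c)
  rw [Finset.map_eq_image, graphF, Finset.image_image]
  simp only [Equiv.coe_toEmbedding, Function.Involutive.coe_toPerm, hcomp]
  rw [← Finset.image_image, Finset.image_univ_equiv]

end GoldShift

theorem gold_uniform_exclude_general (n k : ℕ)
    (F : GaloisField 2 n → GaloisField 2 n) (hF : ∀ x, F x = x ^ (2 ^ k + 1))
    (a α b : GaloisField 2 n) :
    excMult (graphF F) (a, b) = excMult (graphF F) (α, b + F a + F α) := by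
  obtain rfl : F = fun x => x ^ (2 ^ k + 1) := funext hF
  rw [← excMult_map_equiv (goldShift_involutive k (a + α)).toPerm (goldShift_add_add k (a + α)),
    graphF_map_goldShift]
  exact congrArg _ (goldShift_add_right k a α b)

/-- For the Gold function `F(x) = x^(2^k + 1)` on `𝔽_{2ⁿ}` with
`gcd(k, n) = 1`: for all `a, α, b` with `b ≠ F a`,
`d_{G_F}(a, b) = d_{G_F}(α, b + F a + F α)`; i.e., the exclude distribution of `G_F` is
uniform on the partition `{{a} × (𝔽_{2ⁿ} ∖ {F a}) : a ∈ 𝔽_{2ⁿ}}` of the complement of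
the graph. -/
theorem gold_uniform_exclude (n k : ℕ) (hk : Nat.gcd k n = 1)
    (F : GaloisField 2 n → GaloisField 2 n) (hF : ∀ x, F x = x ^ (2 ^ k + 1))
    (a α b : GaloisField 2 n) (hb : b ≠ F a) :
    excMult (graphF F) (a, b) = excMult (graphF F) (α, b + F a + F α) :=
  gold_uniform_exclude_general n k F hF a α b
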